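/- arXiv:1009.4733 — 3 statements merged into one kernel-verified Lean document; each statement's English description precedes it below -/
import Mathlib

section
/- Let 1 ≤ s ≤ M−1 be an integer, let π₁ = (s + (1−p)/p)⁻¹, π_i = π₁ for 1 ≤ i ≤ s, π_i = π₁(1−p)^{i−s} for s < i ≤ M−1, and π_M = π₁(1−p)^{M−s}/p. Then Σ_{i=1}^{s−1} U(i)·π_i + Σ_{i=s}^{M} (U(i) − G − pP + pB)·π_i = π₁ · ( Σ_{x=1}^{s−1} U(x) + Σ_{i=0}^{M−1−s} U(s+i)(1−p)^i − G/p − P + B ). In other words, the expected average reward of the threshold-s policy equals E(s). -/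
open Finset

/-- Stationary distribution of the threshold-`s` aging-control chain:
`π i = π₁` for `1 ≤ i ≤ s`, `π i = π₁ (1-p)^(i-s)` for `s < i ≤ M-1`,
and `π M = π₁ (1-p)^(M-s) / p`, where `π₁ = (s + (1-p)/p)⁻¹`. -/
noncomputable def piDist (M s : ℕ) (p : ℝ) (i : ℕ) : ℝ :=
  if i ≤ s then ((s : ℝ) + (1 - p) / p)⁻¹
  else if i ≤ M - 1 then ((s : ℝ) + (1 - p) / p)⁻¹ * (1 - p) ^ (i - s)
  else ((s : ℝ) + (1 - p) / p)⁻¹ * (1 - p) ^ (M - s) / p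

/-!
On the states `s, …, M` the stationary weights are `π₁ (1-p)^j` followed by the boundary mass
`π₁ (1-p)^(M-s) / p`; together they sum to `π₁ / p`. So the per-step cost `G + pP - pB`, paid on
exactly these states, contributes `-π₁ (G/p + P - B)`, while `U M = 0` removes the boundary
state from the reward sum.
-/

theorem geom_sum_one_sub_add_pow_div {p : ℝ} (hp : p ≠ 0) (n : ℕ) :
    ∑ j ∈ range n, (1 - p) ^ j + (1 - p) ^ n / p = p⁻¹ := by
  have h := geom_sum_mul (1 - p) n
  field_simp
  linear_combination -h

section piDist

variable {M s : ℕ} {p : ℝ} {i : ℕ}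

theorem piDist_of_le (h : i ≤ s) : piDist M s p i = ((s : ℝ) + (1 - p) / p)⁻¹ := if_pos h

theorem piDist_of_le_of_lt (hsi : s ≤ i) (hiM : i < M) :
    piDist M s p i = ((s : ℝ) + (1 - p) / p)⁻¹ * (1 - p) ^ (i - s) := by
  rcases hsi.eq_or_lt with rfl | hlt
  · simp [piDist]
  · simp [piDist, hlt.not_ge, Nat.le_sub_one_of_lt hiM]

theorem piDist_self (hsM : s < M) :
    piDist M s p M = ((s : ℝ) + (1 - p) / p)⁻¹ * (1 - p) ^ (M - s) / p := by
  simp [piDist, hsM.not_ge, Nat.sub_one_lt_of_lt hsM]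

end piDist

theorem sum_Icc_one_mul_piDist (M s : ℕ) (p : ℝ) (f : ℕ → ℝ) :
    ∑ i ∈ Icc 1 (s - 1), f i * piDist M s p i
      = ((s : ℝ) + (1 - p) / p)⁻¹ * ∑ i ∈ Icc 1 (s - 1), f i := by
  rw [mul_sum]
  refine sum_congr rfl fun i hi => ?_
  rw [piDist_of_le (by grind), mul_comm]

theorem sum_Icc_mul_piDist {M s : ℕ} (hsM : s < M) (p : ℝ) (f : ℕ → ℝ) :
    ∑ i ∈ Icc s M, f i * piDist M s p i
      = ((s : ℝ) + (1 - p) / p)⁻¹ *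
          (∑ j ∈ range (M - s), f (s + j) * (1 - p) ^ j + f M * (1 - p) ^ (M - s) / p) := by
  rw [Icc_eq_cons_Ico hsM.le, sum_cons, sum_Ico_eq_sum_range, piDist_self hsM, mul_add,
    mul_sum, add_comm]
  congr 1
  · refine sum_congr rfl fun j hj => ?_
    rw [piDist_of_le_of_lt (by omega) (by grind), Nat.add_sub_cancel_left]
    ring
  · ring

theorem expected_average_reward_general (M s : ℕ) (p G P B : ℝ) (U : ℕ → ℝ)
    (hM : 2 ≤ M) (hp : 0 < p) (hsM : s ≤ M - 1)
    (hUM : U M = 0) :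
    (∑ i ∈ Finset.Icc 1 (s - 1), U i * piDist M s p i)
      + (∑ i ∈ Finset.Icc s M, (U i - G - p * P + p * B) * piDist M s p i)
    = ((s : ℝ) + (1 - p) / p)⁻¹ *
        ((∑ x ∈ Finset.Icc 1 (s - 1), U x)
          + (∑ i ∈ Finset.range (M - s), U (s + i) * (1 - p) ^ i)
          - G / p - P + B) := by
  rw [sum_Icc_one_mul_piDist, sum_Icc_mul_piDist (by omega), hUM]
  simp only [sub_mul, add_mul, sum_add_distrib, sum_sub_distrib, ← mul_sum]
  have hcost : (G + p * P - p * B) * p⁻¹ = G / p + P - B := by field_simp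
  linear_combination -((s : ℝ) + (1 - p) / p)⁻¹ *
    ((G + p * P - p * B) * geom_sum_one_sub_add_pow_div hp.ne' (M - s) + hcost)

/-- The expected average reward of the threshold-`s` policy, computed from the
stationary distribution, equals the closed form
`π₁ ( Σ_{x=1}^{s-1} U x + Σ_{i=0}^{M-1-s} U(s+i)(1-p)^i − G/p − P + B )`. -/
theorem expected_average_reward (M s : ℕ) (p G P B : ℝ) (U : ℕ → ℝ)
    (hM : 2 ≤ M) (hp : 0 < p) (hp1 : p < 1)
    (hs1 : 1 ≤ s) (hsM : s ≤ M - 1)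
    (hU : ∀ ⦃x y : ℕ⦄, 1 ≤ x → x ≤ y → y ≤ M → U y ≤ U x)
    (hUM : U M = 0) :
    (∑ i ∈ Finset.Icc 1 (s - 1), U i * piDist M s p i)
      + (∑ i ∈ Finset.Icc s M, (U i - G - p * P + p * B) * piDist M s p i)
    = ((s : ℝ) + (1 - p) / p)⁻¹ *
        ((∑ x ∈ Finset.Icc 1 (s - 1), U x)
          + (∑ i ∈ Finset.range (M - s), U (s + i) * (1 - p) ^ i)
          - G / p - P + B) :=
  expected_average_reward_general M s p G P B U hM hp hsM hUM
end

section
/- Assume E has a unique maximizer s* over {1,...,M+1} and that s* ≤ M. Then the optimal threshold admits the characterization s* = min { s ∈ {1,...,M} : E(s) ≥ E(s+1) }. -/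
open Finset

/-- Expected average reward `E(s)` of the threshold-`s` policy, for `1 ≤ s ≤ M`;
`E(M+1) = 0` corresponds to the always-inactive policy. -/
noncomputable def Ereward (M : ℕ) (p G P B : ℝ) (U : ℕ → ℝ) (s : ℕ) : ℝ :=
  if s = M + 1 then 0
  else ((s : ℝ) + (1 - p) / p)⁻¹ *
    ((∑ x ∈ Finset.Icc 1 (s - 1), U x)
      + (∑ i ∈ Finset.range (M - s), U (s + i) * (1 - p) ^ i)
      - G / p - P + B)

/-! Write `E(s) = N(s) / d(s)` with `d(s) = s + (1 - p)/p`. Passing from `s` to `s + 1` adds `1` to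
the denominator and `p · R(s+1)` to the numerator, where `R(t) = Σ_{i < M-t} U(t+i)(1-p)^i` is the
discounted tail of rewards; `R` is nonnegative and nonincreasing. By the mediant inequality,
`E(s+1) ≤ E(s)` holds iff `p · R(s+1)` is at most `E(s)`, iff it is at most `E(s+1)`. Hence
`E(s+1) ≤ E(s)` gives `p · R(s+2) ≤ p · R(s+1) ≤ E(s+1)`, i.e. `E(s+2) ≤ E(s+1)`: once `E` stops
increasing it keeps decreasing up to `M + 1`, so the unique maximizer is the first `s` with
`E(s+1) ≤ E(s)`. -/

section Mediant

variable {N a d : ℝ}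

theorem add_div_add_one_le_div_iff (hd : 0 < d) :
    (N + a) / (d + 1) ≤ N / d ↔ a ≤ N / d := by
  rw [div_le_div_iff₀ (by linarith) hd, le_div_iff₀ hd]
  constructor <;> intro h <;> linarith

theorem add_div_add_one_le_div_iff' (hd : 0 < d) :
    (N + a) / (d + 1) ≤ N / d ↔ a ≤ (N + a) / (d + 1) := by
  rw [div_le_div_iff₀ (by linarith) hd, le_div_iff₀ (by linarith)]
  constructor <;> intro h <;> linarith

end Mediant

section Threshold

variable {M s : ℕ} {p G P B : ℝ} {U : ℕ → ℝ}

noncomputable def rewardNumerator (M : ℕ) (p G P B : ℝ) (U : ℕ → ℝ) (s : ℕ) : ℝ :=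
  (∑ x ∈ Icc 1 (s - 1), U x) + (∑ i ∈ range (M - s), U (s + i) * (1 - p) ^ i) - G / p - P + B

noncomputable def discountedTail (M : ℕ) (p : ℝ) (U : ℕ → ℝ) (s : ℕ) : ℝ :=
  ∑ i ∈ range (M - s), U (s + i) * (1 - p) ^ i

theorem Ereward_of_le (h : s ≤ M) :
    Ereward M p G P B U s = rewardNumerator M p G P B U s / (s + (1 - p) / p) := by
  rw [Ereward, if_neg (by omega), inv_mul_eq_div, rewardNumerator]

theorem discountedTail_of_lt (h : s < M) :
    discountedTail M p U s = U s + (1 - p) * discountedTail M p U (s + 1) := by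
  obtain ⟨n, hn⟩ : ∃ n, M - s = n + 1 := ⟨M - s - 1, by omega⟩
  rw [discountedTail, discountedTail, hn, show M - (s + 1) = n by omega, sum_range_succ', mul_sum]
  simp only [add_zero, pow_zero, mul_one, pow_succ]
  rw [add_comm]
  congr 1
  refine sum_congr rfl fun i _ => ?_
  rw [show s + (i + 1) = s + 1 + i by omega]
  ring

theorem rewardNumerator_succ (hs : 1 ≤ s) (hsM : s < M) :
    rewardNumerator M p G P B U (s + 1) =
      rewardNumerator M p G P B U s + p * discountedTail M p U (s + 1) := by
  obtain ⟨t, rfl⟩ : ∃ t, s = t + 1 := ⟨s - 1, by omega⟩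
  have hIcc : ∑ x ∈ Icc 1 (t + 1), U x = (∑ x ∈ Icc 1 t, U x) + U (t + 1) :=
    sum_Icc_succ_top (by omega) U
  have htail := discountedTail_of_lt (p := p) (U := U) hsM
  simp only [rewardNumerator, discountedTail, Nat.add_sub_cancel] at htail ⊢
  rw [hIcc, htail]
  ring

theorem nonneg_of_antitoneOn_of_eq_zero (hU : AntitoneOn U (Set.Icc 1 M)) (hUM : U M = 0)
    {x : ℕ} (h1 : 1 ≤ x) (hx : x ≤ M) : 0 ≤ U x :=
  hUM ▸ hU ⟨h1, hx⟩ ⟨h1.trans hx, le_rfl⟩ hx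

theorem discountedTail_nonneg (hp1 : p < 1) (hU : AntitoneOn U (Set.Icc 1 M)) (hUM : U M = 0)
    (hs : 1 ≤ s) : 0 ≤ discountedTail M p U s :=
  sum_nonneg fun i hi => mul_nonneg
    (nonneg_of_antitoneOn_of_eq_zero hU hUM (by omega) (by have := mem_range.mp hi; omega))
    (pow_nonneg (by linarith) i)

theorem discountedTail_succ_le (hp1 : p < 1) (hU : AntitoneOn U (Set.Icc 1 M)) (hUM : U M = 0)
    (hs : 1 ≤ s) :
    discountedTail M p U (s + 1) ≤ discountedTail M p U s := by
  have hq : (0 : ℝ) ≤ 1 - p := by linarith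
  calc discountedTail M p U (s + 1)
      ≤ ∑ i ∈ range (M - (s + 1)), U (s + i) * (1 - p) ^ i := by
        refine sum_le_sum fun i hi => ?_
        simp only [mem_range] at hi
        exact mul_le_mul_of_nonneg_right (hU ⟨by omega, by omega⟩ ⟨by omega, by omega⟩ (by omega))
          (pow_nonneg hq i)
    _ ≤ discountedTail M p U s := by
        refine sum_le_sum_of_subset_of_nonneg (range_subset_range.mpr (by omega)) fun i hi _ => ?_
        simp only [mem_range] at hi
        exact mul_nonneg (nonneg_of_antitoneOn_of_eq_zero hU hUM (by omega) (by omega))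
          (pow_nonneg hq i)

theorem threshold_denominator_pos (hp : 0 < p) (hs : 1 ≤ s) : 0 < (s : ℝ) + (1 - p) / p := by
  have hs' : (1 : ℝ) ≤ s := by exact_mod_cast hs
  rw [sub_div, div_self hp.ne']
  linarith [one_div_pos.mpr hp]

theorem Ereward_succ_eq (hs : 1 ≤ s) (hsM : s < M) :
    Ereward M p G P B U (s + 1) =
      (rewardNumerator M p G P B U s + p * discountedTail M p U (s + 1)) /
        ((s + (1 - p) / p) + 1) := by
  rw [Ereward_of_le hsM, rewardNumerator_succ hs hsM]
  push_cast
  ring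

theorem Ereward_succ_le_iff (hp : 0 < p) (hs : 1 ≤ s) (hsM : s < M) :
    Ereward M p G P B U (s + 1) ≤ Ereward M p G P B U s ↔
      p * discountedTail M p U (s + 1) ≤ Ereward M p G P B U s := by
  rw [Ereward_succ_eq hs hsM, Ereward_of_le hsM.le]
  exact add_div_add_one_le_div_iff (threshold_denominator_pos hp hs)

theorem Ereward_succ_le_iff' (hp : 0 < p) (hs : 1 ≤ s) (hsM : s < M) :
    Ereward M p G P B U (s + 1) ≤ Ereward M p G P B U s ↔
      p * discountedTail M p U (s + 1) ≤ Ereward M p G P B U (s + 1) := by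
  rw [Ereward_succ_eq hs hsM, Ereward_of_le hsM.le]
  exact add_div_add_one_le_div_iff' (threshold_denominator_pos hp hs)

theorem Ereward_succ_succ_le (hp : 0 < p) (hp1 : p < 1)
    (hU : AntitoneOn U (Set.Icc 1 M)) (hUM : U M = 0)
    (hs : 1 ≤ s) (hsM : s < M) (h : Ereward M p G P B U (s + 1) ≤ Ereward M p G P B U s) :
    Ereward M p G P B U (s + 2) ≤ Ereward M p G P B U (s + 1) := by
  have hbound : p * discountedTail M p U (s + 1) ≤ Ereward M p G P B U (s + 1) :=
    (Ereward_succ_le_iff' hp hs hsM).mp h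
  rcases (Nat.succ_le_of_lt hsM).lt_or_eq with hlt | rfl
  · refine (Ereward_succ_le_iff hp (by omega) hlt).mpr (le_trans ?_ hbound)
    exact mul_le_mul_of_nonneg_left (discountedTail_succ_le hp1 hU hUM (by omega)) hp.le
  · rw [Ereward, if_pos rfl]
    exact le_trans (mul_nonneg hp.le (discountedTail_nonneg hp1 hU hUM (by omega))) hbound

theorem Ereward_antitoneOn_of_succ_le (hp : 0 < p) (hp1 : p < 1)
    (hU : AntitoneOn U (Set.Icc 1 M)) (hUM : U M = 0)
    (hs : 1 ≤ s) (h : Ereward M p G P B U (s + 1) ≤ Ereward M p G P B U s) :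
    AntitoneOn (Ereward M p G P B U) (Set.Icc s (M + 1)) := by
  have step : ∀ t, s ≤ t → t ≤ M → Ereward M p G P B U (t + 1) ≤ Ereward M p G P B U t := by
    intro t hst
    induction t, hst using Nat.le_induction with
    | base => exact fun _ => h
    | succ t hst ih =>
      exact fun ht => Ereward_succ_succ_le hp hp1 hU hUM (by omega) (by omega) (ih (by omega))
  exact antitoneOn_of_add_one_le Set.ordConnected_Icc fun t _ ht ht' =>
    step t ht.1 (by have := ht'.2; omega)

end Threshold

theorem optimal_threshold_characterization_general (M sstar : ℕ) (p G P B : ℝ) (U : ℕ → ℝ)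
    (hp : 0 < p) (hp1 : p < 1)
    (hU : ∀ ⦃x y : ℕ⦄, 1 ≤ x → x ≤ y → y ≤ M → U y ≤ U x)
    (hUM : U M = 0)
    (hmem : sstar ∈ Finset.Icc 1 (M + 1))
    (hmax : ∀ t ∈ Finset.Icc 1 (M + 1), t ≠ sstar →
      Ereward M p G P B U t < Ereward M p G P B U sstar)
    (hle : sstar ≤ M) :
    IsLeast {s : ℕ | 1 ≤ s ∧ s ≤ M ∧
      Ereward M p G P B U (s + 1) ≤ Ereward M p G P B U s} sstar := by
  obtain ⟨hstar1, -⟩ := mem_Icc.mp hmem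
  refine ⟨⟨hstar1, hle, (hmax _ (mem_Icc.mpr ⟨by omega, by omega⟩) (by omega)).le⟩, ?_⟩
  rintro s ⟨hs1, hsM, hs⟩
  by_contra! hlt
  have hUanti : AntitoneOn U (Set.Icc 1 M) := fun x hx y hy hxy => hU hx.1 hxy hy.2
  have hdecr := Ereward_antitoneOn_of_succ_le hp hp1 hUanti hUM hs1 hs
  have hstar_le := hdecr ⟨le_rfl, by omega⟩ ⟨hlt.le, by omega⟩ hlt.le
  linarith [hmax s (mem_Icc.mpr ⟨hs1, by omega⟩) hlt.ne]

/-- If `E` has a unique maximizer `s* ≤ M` over `{1,...,M+1}`, then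
`s* = min { s ∈ {1,...,M} : E(s) ≥ E(s+1) }`. -/
theorem optimal_threshold_characterization (M sstar : ℕ) (p G P B : ℝ) (U : ℕ → ℝ)
    (hM : 2 ≤ M) (hp : 0 < p) (hp1 : p < 1)
    (hU : ∀ ⦃x y : ℕ⦄, 1 ≤ x → x ≤ y → y ≤ M → U y ≤ U x)
    (hUM : U M = 0)
    (hmem : sstar ∈ Finset.Icc 1 (M + 1))
    (hmax : ∀ t ∈ Finset.Icc 1 (M + 1), t ≠ sstar →
      Ereward M p G P B U t < Ereward M p G P B U sstar)
    (hle : sstar ≤ M) :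
    IsLeast {s : ℕ | 1 ≤ s ∧ s ≤ M ∧
      Ereward M p G P B U (s + 1) ≤ Ereward M p G P B U s} sstar :=
  optimal_threshold_characterization_general M sstar p G P B U hp hp1 hU hUM hmem hmax hle
end

section
/- Let N > 0 and T > 0 be reals, and let Q(s) = N/(s + (1−p)/p) denote the average number of messages transmitted per time slot under the threshold-s policy. Suppose the feasible set S = { s ∈ ℤ : 1 ≤ s ≤ M−1 and Q(s) ≤ T } is nonempty. Then the minimum of A over S is attained at the smallest element of S, and this smallest element equals max(1, ⌈N/T − (1−p)/p⌉). -/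
open Finset

/-- Expected age of the threshold-`s` aging-control policy: the mean of the
stationary age distribution of the threshold-`s` chain. -/
noncomputable def Aage (M : ℕ) (p : ℝ) (s : ℕ) : ℝ :=
  ((s : ℝ) + (1 - p) / p)⁻¹ *
    ((∑ i ∈ Finset.Icc 1 s, (i : ℝ))
      + (∑ i ∈ Finset.Icc (s + 1) (M - 1), (i : ℝ) * (1 - p) ^ (i - s))
      + (M : ℝ) * (1 - p) ^ (M - s) / p)

/-! Write `c = (1-p)/p` and `D s` for the tail of the numerator of `A s`, so that
`A s = (∑_{i ≤ s} i + D s)/(s + c)`. Peeling off the term `i = s+1` gives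
`D s = (1-p)(s+1) + (1-p) D (s+1)`, and downward induction from `D (M-1) = M c` gives
`p D s ≥ (1-p)(s+1)`. Using `p c = 1 - p`, the cross-multiplied form of `A s ≤ A (s+1)` is
`∑_{i ≤ s} i ≤ p s (s + 1 + D (s+1))`, whose right side is at least `s (s+1)` by the bound
on `D`. So `A` is nondecreasing on `[0, M-1]`, while the feasible set is the integer interval
`[max 1 ⌈N/T - c⌉, M-1]`, because for `s ≥ 1` the constraint `N/(s + c) ≤ T` reads
`N/T - c ≤ s`. -/

noncomputable def ageTail (M : ℕ) (p : ℝ) (s : ℕ) : ℝ :=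
  (∑ i ∈ Icc (s + 1) (M - 1), (i : ℝ) * (1 - p) ^ (i - s)) + (M : ℝ) * (1 - p) ^ (M - s) / p

lemma Aage_eq_div (M : ℕ) (p : ℝ) (s : ℕ) :
    Aage M p s = ((∑ i ∈ Icc 1 s, (i : ℝ)) + ageTail M p s) / ((s : ℝ) + (1 - p) / p) := by
  rw [Aage, ageTail, inv_mul_eq_div, add_assoc]

lemma ageTail_pred_self (M : ℕ) (p : ℝ) (hM : 0 < M) :
    ageTail M p (M - 1) = M * (1 - p) / p := by
  have hempty : Icc (M - 1 + 1) (M - 1) = ∅ := Icc_eq_empty (by omega)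
  rw [ageTail, hempty, sum_empty, zero_add, Nat.sub_sub_self hM, pow_one]

lemma ageTail_eq_succ (M : ℕ) (p : ℝ) (s : ℕ) (hs : s + 1 ≤ M - 1) :
    ageTail M p s = (1 - p) * ((s : ℝ) + 1) + (1 - p) * ageTail M p (s + 1) := by
  have hIcc : Icc (s + 1) (M - 1) = insert (s + 1) (Icc (s + 1 + 1) (M - 1)) :=
    (insert_Icc_add_one_left_eq_Icc hs).symm
  have hsum : ∑ i ∈ Icc (s + 1 + 1) (M - 1), (i : ℝ) * (1 - p) ^ (i - s)
      = (1 - p) * ∑ i ∈ Icc (s + 1 + 1) (M - 1), (i : ℝ) * (1 - p) ^ (i - (s + 1)) := by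
    rw [mul_sum]
    refine sum_congr rfl fun i hi => ?_
    rw [show i - s = i - (s + 1) + 1 by grind, pow_succ]
    ring
  have hpow : (1 - p) ^ (M - s) = (1 - p) * (1 - p) ^ (M - (s + 1)) := by
    rw [← pow_succ']
    congr 1
    omega
  rw [ageTail, ageTail, hIcc, sum_insert (by simp), hsum, hpow, Nat.add_sub_cancel_left]
  push_cast
  ring

lemma ageTail_lower_bound (M : ℕ) (p : ℝ) (hp : 0 < p) (hp1 : p ≤ 1) (hM : 0 < M)
    {t : ℕ} (ht : t ≤ M - 1) :
    (1 - p) * ((t : ℝ) + 1) ≤ p * ageTail M p t := by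
  induction ht using Nat.decreasingInduction with
  | self =>
    rw [ageTail_pred_self M p hM, Nat.cast_sub (by omega), mul_div_cancel₀ _ hp.ne']
    push_cast
    linarith
  | of_succ t ht ih =>
    rw [ageTail_eq_succ M p t ht]
    push_cast at ih
    have hq : 0 ≤ 1 - p := by linarith
    nlinarith [mul_le_mul_of_nonneg_left ih hq]

lemma sum_Icc_one_cast_le_sq (s : ℕ) : ∑ i ∈ Icc 1 s, (i : ℝ) ≤ (s : ℝ) ^ 2 := by
  calc ∑ i ∈ Icc 1 s, (i : ℝ)
      ≤ #(Icc 1 s) • (s : ℝ) :=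
        sum_le_card_nsmul _ _ _ fun i hi => by exact_mod_cast (mem_Icc.mp hi).2
    _ = (s : ℝ) ^ 2 := by rw [Nat.card_Icc, nsmul_eq_mul, Nat.add_sub_cancel, sq]

lemma Aage_le_Aage_succ (M : ℕ) (p : ℝ) (hp : 0 < p) (hp1 : p < 1) {s : ℕ}
    (hs : s + 1 ≤ M - 1) :
    Aage M p s ≤ Aage M p (s + 1) := by
  have hsum : ∑ i ∈ Icc 1 (s + 1), (i : ℝ) = (∑ i ∈ Icc 1 s, (i : ℝ)) + (s + 1) := by
    rw [sum_Icc_succ_top (by omega)]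
    push_cast
    rfl
  rw [Aage_eq_div, Aage_eq_div, ageTail_eq_succ M p s hs, hsum]
  have hc : p * ((1 - p) / p) = 1 - p := mul_div_cancel₀ _ hp.ne'
  have hc0 : 0 < (1 - p) / p := div_pos (by linarith) hp
  generalize (1 - p) / p = c at hc hc0 ⊢
  generalize hX : ∑ i ∈ Icc 1 s, (i : ℝ) = X
  generalize hD : ageTail M p (s + 1) = D
  have hDlower : (1 - p) * ((s : ℝ) + 2) ≤ p * D := by
    have := ageTail_lower_bound M p hp hp1.le (by omega) hs
    rw [hD] at this
    push_cast at this
    linarith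
  have hXupper : X ≤ p * s * (s + 1 + D) := by
    have hs0 : (0 : ℝ) ≤ s := s.cast_nonneg
    nlinarith [hX ▸ sum_Icc_one_cast_le_sq s, mul_le_mul_of_nonneg_left hDlower hs0]
  push_cast
  rw [div_le_div_iff₀ (by positivity) (by positivity)]
  -- the difference of the two sides is `p s (s + 1 + D) - X`
  linear_combination hXupper - (s + 1 + D) * hc

lemma Aage_monotoneOn (M : ℕ) (p : ℝ) (hp : 0 < p) (hp1 : p < 1) :
    MonotoneOn (Aage M p) (Set.Iic (M - 1)) :=
  monotoneOn_of_le_succ Set.ordConnected_Iic fun _ _ _ hs =>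
    Aage_le_Aage_succ M p hp hp1 hs

lemma one_le_and_div_add_le_iff_max_ceil_le {N T c : ℝ} (hT : 0 < T) (hc : 0 ≤ c) {s : ℕ} :
    1 ≤ s ∧ N / (s + c) ≤ T ↔ max 1 ⌈N / T - c⌉ ≤ (s : ℤ) := by
  rw [max_le_iff, Int.ceil_le, Int.cast_natCast, Nat.one_le_cast, sub_le_iff_le_add]
  exact and_congr_right fun hs =>
    div_le_comm₀ (add_pos_of_pos_of_nonneg (by exact_mod_cast hs) hc) hT

theorem publisher_problem_solution_general (M : ℕ) (p N T : ℝ)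
    (hp : 0 < p) (hp1 : p < 1) (hT : 0 < T)
    (hne : {s : ℕ | 1 ≤ s ∧ s ≤ M - 1 ∧
      N / ((s : ℝ) + (1 - p) / p) ≤ T}.Nonempty) :
    ∃ s₀ : ℕ,
      IsLeast {s : ℕ | 1 ≤ s ∧ s ≤ M - 1 ∧
        N / ((s : ℝ) + (1 - p) / p) ≤ T} s₀ ∧
      (∀ s ∈ {s : ℕ | 1 ≤ s ∧ s ≤ M - 1 ∧
        N / ((s : ℝ) + (1 - p) / p) ≤ T}, Aage M p s₀ ≤ Aage M p s) ∧
      (s₀ : ℤ) = max 1 ⌈N / T - (1 - p) / p⌉ := by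
  set m := max 1 ⌈N / T - (1 - p) / p⌉
  have hfeasible (s : ℕ) : (1 ≤ s ∧ s ≤ M - 1 ∧ N / ((s : ℝ) + (1 - p) / p) ≤ T) ↔
      m ≤ s ∧ s ≤ M - 1 := by
    rw [← one_le_and_div_add_le_iff_max_ceil_le hT (div_pos (by linarith) hp).le]
    tauto
  simp only [hfeasible] at hne ⊢
  obtain ⟨s, hms, hsM⟩ := hne
  have hm : (m.toNat : ℤ) = m := Int.toNat_of_nonneg (by omega)
  have hleast : IsLeast {s : ℕ | m ≤ s ∧ s ≤ M - 1} m.toNat :=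
    ⟨⟨hm.ge, by omega⟩, fun s hs => by have := hs.1; omega⟩
  exact ⟨m.toNat, hleast, fun s hs => Aage_monotoneOn M p hp hp1 hleast.1.2 hs.2 (hleast.2 hs),
    hm⟩

/-- The publisher's problem: with `Q(s) = N/(s + (1−p)/p)` the average number of
messages per slot and nonempty feasible set `S = { s : 1 ≤ s ≤ M−1, Q(s) ≤ T }`,
the average age `A` is minimized over `S` at the smallest element of `S`, which
equals `max(1, ⌈N/T − (1−p)/p⌉)`. -/
theorem publisher_problem_solution (M : ℕ) (p N T : ℝ)
    (hM : 2 ≤ M) (hp : 0 < p) (hp1 : p < 1) (hN : 0 < N) (hT : 0 < T)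
    (hne : {s : ℕ | 1 ≤ s ∧ s ≤ M - 1 ∧
      N / ((s : ℝ) + (1 - p) / p) ≤ T}.Nonempty) :
    ∃ s₀ : ℕ,
      IsLeast {s : ℕ | 1 ≤ s ∧ s ≤ M - 1 ∧
        N / ((s : ℝ) + (1 - p) / p) ≤ T} s₀ ∧
      (∀ s ∈ {s : ℕ | 1 ≤ s ∧ s ≤ M - 1 ∧
        N / ((s : ℝ) + (1 - p) / p) ≤ T}, Aage M p s₀ ≤ Aage M p s) ∧
      (s₀ : ℤ) = max 1 ⌈N / T - (1 - p) / p⌉ :=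
  publisher_problem_solution_general M p N T hp hp1 hT hne
end
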